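/- arXiv:2410.12563 — 2 statements merged into one kernel-verified Lean document; each statement's English description precedes it below -/
import Mathlib

section
/- For a family of similar polytopes P(A, cᵢ, αᵢ z) for i in a finite index set I, with all αᵢ > 0, the Minkowski sum ⊕_{i∈I} P(A, cᵢ, αᵢ z) equals P(A, Σᵢ cᵢ, (Σᵢ αᵢ) z). -/
open Pointwise

/-- Minkowski sum of similar polytopes. -/
theorem minkowski_sum_similar_polytopes
    {n m : ℕ} {ι : Type*} (A : Matrix (Fin m) (Fin n) ℝ) (z : Fin m → ℝ)
    (hbdd : Bornology.IsBounded {x : Fin n → ℝ | A.mulVec x ≤ z})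
    (I : Finset ι) (hI : I.Nonempty)
    (c : ι → Fin n → ℝ) (α : ι → ℝ) (hα : ∀ i ∈ I, 0 < α i) :
    (∑ i ∈ I, {x : Fin n → ℝ | A.mulVec (x - c i) ≤ α i • z})
      = {x : Fin n → ℝ | A.mulVec (x - ∑ i ∈ I, c i) ≤ (∑ i ∈ I, α i) • z} := by
  classical
  have hS : 0 < ∑ i ∈ I, α i := Finset.sum_pos hα hI
  ext x
  rw [Set.mem_finset_sum]
  constructor
  · rintro ⟨g, hg, rfl⟩
    simp only [Set.mem_setOf_eq]
    have : (∑ i ∈ I, g i) - ∑ i ∈ I, c i = ∑ i ∈ I, (g i - c i) := by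
      rw [Finset.sum_sub_distrib]
    rw [this]
    intro j
    have : A.mulVec (∑ i ∈ I, (g i - c i)) j = ∑ i ∈ I, A.mulVec (g i - c i) j := by
      simp only [Matrix.mulVec, dotProduct, Finset.sum_apply, Pi.sub_apply,
        Finset.mul_sum, Finset.sum_sub_distrib, mul_sub]
      rw [Finset.sum_comm]
      congr 1
      rw [Finset.sum_comm]
    rw [this]
    have hz : ((∑ i ∈ I, α i) • z) j = ∑ i ∈ I, (α i • z) j := by
      simp [Finset.sum_smul, Finset.sum_apply, Finset.sum_mul]
    rw [hz]
    exact Finset.sum_le_sum fun i hi => hg hi j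
  · intro hx
    simp only [Set.mem_setOf_eq] at hx
    set S := ∑ i ∈ I, α i with hSdef
    refine ⟨fun i => c i + (α i / S) • (x - ∑ i ∈ I, c i), fun {i} hi => ?_, ?_⟩
    · simp only [Set.mem_setOf_eq, add_sub_cancel_left]
      rw [Matrix.mulVec_smul]
      intro j
      have h1 : A.mulVec (x - ∑ i ∈ I, c i) j ≤ S * z j := hx j
      have hpos : 0 < α i / S := div_pos (hα i hi) hS
      calc (α i / S) • A.mulVec (x - ∑ i ∈ I, c i) j
          ≤ (α i / S) * (S * z j) := by
            exact mul_le_mul_of_nonneg_left h1 hpos.le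
        _ = α i * z j := by field_simp
        _ = (α i • z) j := rfl
    · rw [Finset.sum_add_distrib, ← Finset.sum_smul]
      have : ∑ i ∈ I, α i / S = 1 := by
        rw [← Finset.sum_div, ← hSdef, div_self hS.ne']
      rw [this, one_smul, add_sub_cancel]
end

section
/- Let e_{ip}, e_{rs} : ℝ → ℝⁿ for edges (r,s) in a finite set E (a path from p back to i), with Σ_{(r,s)∈E} e_{rs}(t) + e_{ip}(t) = 0 for all t. Suppose e_{rs}(t) ∈ B_{rs} for all t ∈ [a_{rs},b_{rs}] for each (r,s) ∈ E, that [a_{ip},b_{ip}] ⊆ ⋂_{(r,s)∈E}[a_{rs},b_{rs}], and that there exists τ ∈ [a_{ip},b_{ip}] with e_{ip}(τ) ∈ B_{ip}. Then 0 ∈ B_{ip} ⊕ (⊕_{(r,s)∈E} B_{rs}). -/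
open Pointwise

/-- Fact 5: cycle with one eventually-edge and always return path. -/
theorem cycle_eventually_zero_in_minkowski
    {n : ℕ} {ε : Type*} (E : Finset ε)
    (eip : ℝ → (Fin n → ℝ)) (e : ε → ℝ → (Fin n → ℝ))
    (Bip : Set (Fin n → ℝ)) (B : ε → Set (Fin n → ℝ))
    (a b : ε → ℝ) (aip bip : ℝ)
    (hcycle : ∀ t : ℝ, (∑ rs ∈ E, e rs t) + eip t = 0)
    (hmem : ∀ rs ∈ E, ∀ t ∈ Set.Icc (a rs) (b rs), e rs t ∈ B rs)
    (hsub : Set.Icc aip bip ⊆ ⋂ rs ∈ E, Set.Icc (a rs) (b rs))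
    (τ : ℝ) (hτ : τ ∈ Set.Icc aip bip) (hτip : eip τ ∈ Bip) :
    (0 : Fin n → ℝ) ∈ Bip + ∑ rs ∈ E, B rs := by
  have h0 : (0 : Fin n → ℝ) = eip τ + ∑ rs ∈ E, e rs τ := by
    rw [← hcycle τ]; ring
  rw [h0]
  exact Set.add_mem_add hτip (Set.finset_sum_mem_finset_sum _ _ _ (fun rs hrs =>
    hmem rs hrs τ (by simpa using Set.mem_iInter₂.mp (hsub hτ) rs hrs)))
end
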